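/- Let G = (X ∪ Y, E) be a finite connected bipartite graph with |X| = |Y| = n, and suppose that every x ∈ X and every y ∈ Y is matched in every stable matching under every preference instance. Then for every x ∈ X with a neighbor v ∈ Y of degree n, x is adjacent to all of Y. -/

import Mathlib

/-!
Every maximal matching `M` is stable for the preferences in which each matched vertex ranks its
partner first, so if all stable matchings are perfect then so are all maximal matchings. Now
suppose `x` is not adjacent to `y ∈ Y`; a neighbour `v` of `x` of degree `|X|` is adjacent to
all of `X`. Extend `xv` to a maximal, hence perfect, matching, and let `a ∈ X` be the partner
of `y`. Replacing `xv` and `ya` by `va` leaves exactly `x` and `y` unmatched; as `xy` is not an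
edge the new matching is still maximal, but it is not perfect.
-/

open SimpleGraph Finset

/-- A preference instance: each vertex ranks its neighbors injectively
(lower rank = more preferred). This encodes a strict linear order over neighbors. -/
def IsPrefInstance {V : Type*} (G : SimpleGraph V) (rank : V → V → ℕ) : Prop :=
  ∀ v : V, Set.InjOn (rank v) (G.neighborSet v)

/-- A vertex is matched in a subgraph if it has a partner. -/
def Matched {V : Type*} {G : SimpleGraph V} (M : G.Subgraph) (v : V) : Prop :=
  ∃ w, M.Adj v w

/-- `M` is a stable matching: it is a matching of `G` and there is no blocking pair,
i.e. no edge `xy` of `G` not in `M` such that `x` is unmatched or prefers `y` to its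
partner, and `y` is unmatched or prefers `x` to its partner. -/
def IsStableMatching {V : Type*} {G : SimpleGraph V} (rank : V → V → ℕ) (M : G.Subgraph) :
    Prop :=
  M.IsMatching ∧
    ¬ ∃ x y, G.Adj x y ∧ ¬ M.Adj x y ∧
      (∀ w, M.Adj x w → rank x y < rank x w) ∧
      (∀ w, M.Adj y w → rank y x < rank y w)

/-- `G` is bipartite with parts `X` and `Y`. -/
def IsBipartiteWith {V : Type*} (G : SimpleGraph V) (X Y : Finset V) : Prop :=
  Disjoint X Y ∧ (∀ v : V, v ∈ X ∨ v ∈ Y) ∧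
    ∀ ⦃a b : V⦄, G.Adj a b → (a ∈ X ∧ b ∈ Y) ∨ (a ∈ Y ∧ b ∈ X)

/-- The second neighborhood `N(N(x))`. -/
def NN {V : Type*} (G : SimpleGraph V) [Fintype V] [DecidableEq V] [DecidableRel G.Adj]
    (x : V) : Finset V :=
  (G.neighborFinset x).biUnion fun y => G.neighborFinset y

namespace SimpleGraph

variable {V : Type*} {G : SimpleGraph V}

def Subgraph.IsMaximalMatching (M : G.Subgraph) : Prop :=
  M.IsMatching ∧ ∀ ⦃a b⦄, G.Adj a b → a ∈ M.verts ∨ b ∈ M.verts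

def HasUniversallyPerfectStableMatchings (G : SimpleGraph V) : Prop :=
  ∀ rank : V → V → ℕ, IsPrefInstance G rank →
    ∀ M : G.Subgraph, IsStableMatching rank M → ∀ v : V, Matched M v

namespace Subgraph

variable {M : G.Subgraph}

lemma IsMatching.sup_subgraphOfAdj (hM : M.IsMatching) {a b : V} (hab : G.Adj a b)
    (ha : a ∉ M.verts) (hb : b ∉ M.verts) : (M ⊔ G.subgraphOfAdj hab).IsMatching := by
  refine hM.sup (.subgraphOfAdj hab) ?_
  rw [hM.support_eq_verts, (IsMatching.subgraphOfAdj hab).support_eq_verts,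
    subgraphOfAdj_verts, Set.disjoint_insert_right, Set.disjoint_singleton_right]
  exact ⟨ha, hb⟩

lemma IsMatching.exists_isMaximalMatching_ge [Finite V] (hM : M.IsMatching) :
    ∃ M', M ≤ M' ∧ M'.IsMaximalMatching := by
  obtain ⟨M', hle, hmax⟩ := Finite.exists_le_maximal (p := IsMatching) hM
  refine ⟨M', hle, hmax.prop, fun a b hab => ?_⟩
  by_contra! hab'
  have hle' := hmax.2 (hmax.prop.sup_subgraphOfAdj hab hab'.1 hab'.2) le_sup_left
  exact hab'.1 (hle'.1 (Or.inr (by simp)))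

lemma IsMatching.deleteVerts {s : Set V} (hM : M.IsMatching)
    (hs : ∀ ⦃u w⦄, M.Adj u w → u ∈ s → w ∈ s) : (M.deleteVerts s).IsMatching := by
  rintro u ⟨hu, hus⟩
  obtain ⟨w, huw, huniq⟩ := hM hu
  have hws : w ∉ s := fun hw => hus (hs huw.symm hw)
  refine ⟨w, deleteVerts_adj.2 ⟨hu, hus, huw.snd_mem, hws, huw⟩, fun w' hw' => ?_⟩
  exact huniq w' (deleteVerts_adj.1 hw').2.2.2.2

/-- Trading the matching edges `xv`, `ya` for the edge `va` (alternating path `x v a y`). -/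
lemma IsMatching.exists_isMatching_verts_eq_sdiff (hM : M.IsMatching) {x v y a : V}
    (hxv : M.Adj x v) (hya : M.Adj y a) (hva : G.Adj v a) (hxa : x ≠ a) (hvy : v ≠ y) :
    ∃ M' : G.Subgraph, M'.IsMatching ∧ M'.verts = M.verts \ {x, y} := by
  have hclosed : ∀ ⦃u w⦄, M.Adj u w → u ∈ ({x, v, y, a} : Set V) →
      w ∈ ({x, v, y, a} : Set V) := by
    rintro u w huw (rfl | rfl | rfl | rfl)
    · simp [hM.eq_of_adj_left huw hxv]
    · simp [hM.eq_of_adj_left huw hxv.symm]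
    · simp [hM.eq_of_adj_left huw hya]
    · simp [hM.eq_of_adj_left huw hya.symm]
  have hdel := hM.deleteVerts hclosed
  refine ⟨_, hdel.sup (.subgraphOfAdj hva) ?_, ?_⟩
  · rw [hdel.support_eq_verts, (IsMatching.subgraphOfAdj hva).support_eq_verts]
    simp +contextual [Set.disjoint_left]
  · have := hxv.ne
    have := hya.ne
    have := hxv.snd_mem
    have := hya.snd_mem
    ext u
    simp only [verts_sup, deleteVerts_verts, subgraphOfAdj_verts, Set.mem_union, Set.mem_sdiff,
      Set.mem_insert_iff, Set.mem_singleton_iff]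
    constructor
    · rintro (⟨hu, h⟩ | rfl | rfl) <;> tauto
    · tauto

end Subgraph

open Subgraph

open Classical in
noncomputable def partnerFirstRank (M : G.Subgraph) (f : V → ℕ) (u w : V) : ℕ :=
  if M.Adj u w then 0 else f w + 1

variable {M : G.Subgraph} {f : V → ℕ}

lemma Subgraph.IsMatching.isPrefInstance_partnerFirstRank (hM : M.IsMatching)
    (hf : f.Injective) : IsPrefInstance G (partnerFirstRank M f) := by
  intro u w₁ _ w₂ _ h
  unfold partnerFirstRank at h
  split_ifs at h with h₁ h₂
  · exact hM.eq_of_adj_left h₁ h₂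
  · exact hf (by omega)

lemma Subgraph.IsMaximalMatching.isStableMatching_partnerFirstRank (hM : M.IsMaximalMatching) :
    IsStableMatching (partnerFirstRank M f) M := by
  refine ⟨hM.1, fun ⟨p, q, hpq, _, hp, hq⟩ => ?_⟩
  rcases hM.2 hpq with h | h
  · obtain ⟨w, hw, -⟩ := hM.1 h
    simpa [partnerFirstRank, hw] using hp w hw
  · obtain ⟨w, hw, -⟩ := hM.1 h
    simpa [partnerFirstRank, hw] using hq w hw

namespace HasUniversallyPerfectStableMatchings

variable (h : G.HasUniversallyPerfectStableMatchings)
include h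

lemma isSpanning [Countable V] (hM : M.IsMaximalMatching) : M.IsSpanning := by
  obtain ⟨f, hf⟩ := exists_injective_nat V
  intro u
  obtain ⟨w, huw⟩ := h _ (hM.1.isPrefInstance_partnerFirstRank hf) M
    hM.isStableMatching_partnerFirstRank u
  exact huw.fst_mem

lemma adj_of_adj_partner [Countable V] (hM : M.IsMaximalMatching) {x v y a : V}
    (hxv : M.Adj x v) (hya : M.Adj y a) (hva : G.Adj v a) (hxy : x ≠ y) : G.Adj x y := by
  by_contra hnxy
  have hxa : x ≠ a := by
    rintro rfl
    exact hnxy (M.adj_sub hya.symm)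
  have hvy : v ≠ y := by
    rintro rfl
    exact hnxy (M.adj_sub hxv)
  obtain ⟨M', hM', hverts⟩ := hM.1.exists_isMatching_verts_eq_sdiff hxv hya hva hxa hvy
  have hcover : ∀ u, u ≠ x → u ≠ y → u ∈ M'.verts := fun u hux huy => by
    rw [hverts]
    exact ⟨h.isSpanning hM u, by simp [hux, huy]⟩
  have hmax : M'.IsMaximalMatching := by
    refine ⟨hM', fun s t hst => ?_⟩
    by_cases hsx : s = x
    · subst hsx
      exact .inr (hcover t hst.ne' fun hty => hnxy (hty ▸ hst))
    by_cases hsy : s = y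
    · subst hsy
      exact .inr (hcover t (fun htx => hnxy (htx ▸ hst.symm)) hst.ne')
    exact .inl (hcover s hsx hsy)
  have hx := h.isSpanning hmax x
  simp [hverts] at hx

end HasUniversallyPerfectStableMatchings

end SimpleGraph

namespace IsBipartiteWith

variable {V : Type*} {G : SimpleGraph V} {X Y : Finset V} (hB : _root_.IsBipartiteWith G X Y)
include hB

lemma mem_left_of_adj {y a : V} (hy : y ∈ Y) (hya : G.Adj y a) : a ∈ X := by
  rcases hB.2.2 hya with ⟨hyX, -⟩ | ⟨-, haX⟩
  · exact absurd hy (disjoint_left.1 hB.1 hyX)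
  · exact haX

lemma adj_of_card_le_degree [Fintype V] [DecidableRel G.Adj] {v a : V} (hv : v ∈ Y)
    (hdeg : X.card ≤ G.degree v) (ha : a ∈ X) : G.Adj v a := by
  have hsub : G.neighborFinset v ⊆ X := fun u hu =>
    hB.mem_left_of_adj hv ((G.mem_neighborFinset v u).1 hu)
  have heq := eq_of_subset_of_card_le hsub (by rwa [card_neighborFinset_eq_degree])
  exact (G.mem_neighborFinset v a).1 (heq ▸ ha)

end IsBipartiteWith

theorem stmt_13_general {V : Type*} [Fintype V] (G : SimpleGraph V)
    [DecidableRel G.Adj] (X Y : Finset V) (n : ℕ)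
    (hBip : _root_.IsBipartiteWith G X Y)
    (hXcard : X.card = n)
    (hmatched : ∀ rank : V → V → ℕ, IsPrefInstance G rank →
      ∀ M : G.Subgraph, IsStableMatching rank M → ∀ v : V, Matched M v) :
    ∀ x ∈ X, ∀ v : V, G.Adj x v → v ∈ Y → G.degree v = n →
      ∀ y ∈ Y, G.Adj x y := by
  intro x hx v hxv hv hdeg y hy
  have h : G.HasUniversallyPerfectStableMatchings := hmatched
  obtain ⟨M, hle, hM⟩ := (Subgraph.IsMatching.subgraphOfAdj hxv).exists_isMaximalMatching_ge
  obtain ⟨a, hya, -⟩ := hM.1 (h.isSpanning hM y)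
  have haX : a ∈ X := hBip.mem_left_of_adj hy (M.adj_sub hya)
  have hva : G.Adj v a := hBip.adj_of_card_le_degree hv (hXcard.trans hdeg.symm).le haX
  exact h.adj_of_adj_partner hM (hle.2 (by simp)) hya hva
    fun hxy => disjoint_left.1 hBip.1 hx (hxy ▸ hy)

theorem stmt_13 {V : Type*} [Fintype V] [DecidableEq V] (G : SimpleGraph V)
    [DecidableRel G.Adj] (X Y : Finset V) (n : ℕ)
    (hBip : _root_.IsBipartiteWith G X Y) (hconn : G.Connected)
    (hXcard : X.card = n) (hYcard : Y.card = n)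
    (hmatched : ∀ rank : V → V → ℕ, IsPrefInstance G rank →
      ∀ M : G.Subgraph, IsStableMatching rank M → ∀ v : V, Matched M v) :
    ∀ x ∈ X, ∀ v : V, G.Adj x v → v ∈ Y → G.degree v = n →
      ∀ y ∈ Y, G.Adj x y :=
  stmt_13_general G X Y n hBip hXcard hmatched
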